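/- Let 𝒜 be a Scott closed subset of X̃, where X is a directed space and X̃ is its D-completion dcpo. Then the union ⋃𝒜 is a closed subset of X. -/
import Mathlib


open Set

variable {X : Type*} [TopologicalSpace X]

/-- The specialization order of the paper: `x ⊑ y` iff `x ∈ cl {y}`. -/
def specLe (x y : X) : Prop := x ∈ closure {y}

/-- A directed set `D` converges to `x` iff it meets every open neighborhood of `x`. -/
def DConv (D : Set X) (x : X) : Prop :=
  ∀ U : Set X, IsOpen U → x ∈ U → (D ∩ U).Nonempty

/-- `U` is directed-open. -/
def DirOpen (U : Set X) : Prop :=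
  ∀ (D : Set X) (x : X), D.Nonempty → DirectedOn specLe D → DConv D x → x ∈ U →
    (D ∩ U).Nonempty

/-- `X̃` as a set: the least subfamily of `Γ(X)` (nonempty closed sets, ordered by
inclusion, with directed suprema given by closures of unions) containing all point
closures and closed under directed suprema, i.e. the d-closure of `Ψ(X)` in `Γ(X)`. -/
def XtildeSet (X : Type*) [TopologicalSpace X] : Set (Set X) :=
  ⋂₀ {S : Set (Set X) | S ⊆ {A | IsClosed A ∧ A.Nonempty} ∧
      (∀ x : X, closure {x} ∈ S) ∧
      ∀ 𝒟 ⊆ S, 𝒟.Nonempty → DirectedOn (· ⊆ ·) 𝒟 → closure (⋃₀ 𝒟) ∈ S}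

/-- The dcpo `X̃`, ordered by inclusion. -/
abbrev Xtilde (X : Type*) [TopologicalSpace X] := {A : Set X // A ∈ XtildeSet X}

/-- A Scott open subset of the dcpo `X̃`. -/
def ScottOpen (V : Set (Xtilde X)) : Prop :=
  IsUpperSet V ∧ ∀ d : Set (Xtilde X), d.Nonempty → DirectedOn (· ≤ ·) d →
    ∀ a : Xtilde X, IsLUB d a → a ∈ V → (d ∩ V).Nonempty

/-- A Scott closed subset of the dcpo `X̃`: a lower set closed under directed suprema. -/
def ScottClosed (F : Set (Xtilde X)) : Prop :=
  IsLowerSet F ∧ ∀ d ⊆ F, d.Nonempty → DirectedOn (· ≤ ·) d →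
    ∀ a : Xtilde X, IsLUB d a → a ∈ F


lemma mem_XtildeSet_props {A : Set X} (h : A ∈ XtildeSet X) : IsClosed A ∧ A.Nonempty := by
  have := h {A | IsClosed A ∧ A.Nonempty}
  apply this
  refine ⟨fun B hB => hB, fun x => ⟨isClosed_closure, ⟨x, subset_closure rfl⟩⟩, ?_⟩
  rintro 𝒟 h𝒟 ⟨B, hB⟩ _
  refine ⟨isClosed_closure, ?_⟩
  obtain ⟨_, hBne⟩ := h𝒟 hB
  obtain ⟨b, hb⟩ := hBne
  exact ⟨b, subset_closure ⟨B, hB, hb⟩⟩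

lemma closure_singleton_mem_XtildeSet (x : X) : closure {x} ∈ XtildeSet X :=
  fun _ hS => hS.2.1 x

lemma closure_mem_XtildeSet {D : Set X} (hD : D.Nonempty) (hdir : DirectedOn specLe D) :
    closure D ∈ XtildeSet X := by
  intro S hS
  obtain ⟨_, hpt, hsup⟩ := hS
  have key : closure (⋃₀ ((fun d => closure {d}) '' D)) ∈ S := by
    apply hsup
    · rintro _ ⟨d, _, rfl⟩; exact hpt d
    · exact hD.image _
    · rintro _ ⟨d1, hd1, rfl⟩ _ ⟨d2, hd2, rfl⟩
      obtain ⟨d3, hd3, h13, h23⟩ := hdir d1 hd1 d2 hd2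
      exact ⟨closure {d3}, mem_image_of_mem _ hd3,
        closure_minimal (singleton_subset_iff.2 h13) isClosed_closure,
        closure_minimal (singleton_subset_iff.2 h23) isClosed_closure⟩
  have heq : closure (⋃₀ ((fun d => closure {d}) '' D)) = closure D := by
    apply subset_antisymm
    · apply closure_minimal _ isClosed_closure
      rintro y ⟨_, ⟨d, hd, rfl⟩, hy⟩
      exact closure_mono (singleton_subset_iff.2 hd) hy
    · apply closure_mono
      intro d hd
      exact ⟨closure {d}, mem_image_of_mem _ hd, subset_closure rfl⟩
  rwa [heq] at key

/-- For a directed space `X` and a Scott closed `𝒜 ⊆ X̃`, the union `⋃𝒜` is closed in `X`. -/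
theorem stmt_15 [T0Space X] (hX : ∀ U : Set X, DirOpen U → IsOpen U)
    (𝒜 : Set (Xtilde X)) (h𝒜 : ScottClosed 𝒜) :
    IsClosed (⋃ B ∈ 𝒜, (B : Xtilde X).1) := by
  rw [← isOpen_compl_iff]
  apply hX
  intro D x hDne hdir hconv hx
  by_contra hempty
  have hDsub : D ⊆ ⋃ B ∈ 𝒜, (B : Xtilde X).1 := by
    intro d hd
    by_contra h
    exact hempty ⟨d, hd, h⟩
  -- the directed family of point closures of elements of D
  set f : X → Xtilde X := fun d => ⟨closure {d}, closure_singleton_mem_XtildeSet d⟩ with hf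
  set 𝒟 : Set (Xtilde X) := f '' D with h𝒟def
  have h𝒟sub : 𝒟 ⊆ 𝒜 := by
    rintro _ ⟨d, hd, rfl⟩
    obtain ⟨B, ⟨B', hB', rfl⟩, hdB⟩ := hDsub hd
    simp only [mem_iUnion, exists_prop] at hdB
    obtain ⟨hB'A, hdB'⟩ := hdB
    refine h𝒜.1 ?_ hB'A
    show closure {d} ⊆ B'.1
    exact closure_minimal (singleton_subset_iff.2 hdB') (mem_XtildeSet_props B'.2).1
  have h𝒟ne : 𝒟.Nonempty := hDne.image f
  have h𝒟dir : DirectedOn (· ≤ ·) 𝒟 := by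
    rintro _ ⟨d1, hd1, rfl⟩ _ ⟨d2, hd2, rfl⟩
    obtain ⟨d3, hd3, h13, h23⟩ := hdir d1 hd1 d2 hd2
    refine ⟨f d3, mem_image_of_mem _ hd3, ?_, ?_⟩
    · show closure {d1} ⊆ closure {d3}
      exact closure_minimal (singleton_subset_iff.2 h13) isClosed_closure
    · show closure {d2} ⊆ closure {d3}
      exact closure_minimal (singleton_subset_iff.2 h23) isClosed_closure
  set a : Xtilde X := ⟨closure D, closure_mem_XtildeSet hDne hdir⟩ with ha
  have hlub : IsLUB 𝒟 a := by
    constructor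
    · rintro _ ⟨d, hd, rfl⟩
      show closure {d} ⊆ closure D
      exact closure_mono (singleton_subset_iff.2 hd)
    · intro C hC
      show closure D ⊆ C.1
      refine closure_minimal ?_ (mem_XtildeSet_props C.2).1
      intro d hd
      exact hC (mem_image_of_mem f hd) (subset_closure rfl)
  have haA : a ∈ 𝒜 := h𝒜.2 𝒟 h𝒟sub h𝒟ne h𝒟dir a hlub
  have hxa : x ∈ closure D := by
    rw [mem_closure_iff]
    intro U hU hxU
    obtain ⟨y, hyD, hyU⟩ := hconv U hU hxU
    exact ⟨y, hyU, hyD⟩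
  exact hx (mem_biUnion haA hxa)
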